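/- Suppose S = I_m, C₊ = C₋, and Ω₊ = Ω₋ (with Ω₋ Hermitian and Ω₊ symmetric), which is the q-coupling case of the QND-interaction condition. Then the quadrature state-space matrices have the explicit forms C = 2·[[Re(C₋), 0],[Im(C₋), 0]], B = [[0, 0],[−2Im(C₋†), −2Re(C₋†)]], and A = 2·[[Im(Ω₋), 0],[−(Re(Ω₋) + Im(C₋†)Re(C₋) + Re(C₋†)Im(C₋)), 0]]. Consequently: (i) [I_n 0]·Aᵏ·B = 0 for all integers k ≥ 0, i.e., the amplitude quadratures q are uncontrollable (they evolve autonomously, so that q is a QND variable whenever the corresponding subsystem is observable); and (ii) for every s ∈ ℂ with sI_{2n} − A invertible, G[s] = I_{2m}, so in particular G_qp[s] = 0 and G_pq[s] = 0, realizing the BAE measurements of q_out with respect to p_in and of p_out with respect to q_in. -/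

import Mathlib

open Matrix

noncomputable section

namespace LQS

/-- Entrywise real part, as a complex matrix. -/
def matRe {k l : ℕ} (X : Matrix (Fin k) (Fin l) ℂ) : Matrix (Fin k) (Fin l) ℂ :=
  fun i j => ((X i j).re : ℂ)

/-- Entrywise imaginary part, as a complex matrix. -/
def matIm {k l : ℕ} (X : Matrix (Fin k) (Fin l) ℂ) : Matrix (Fin k) (Fin l) ℂ :=
  fun i j => ((X i j).im : ℂ)

/-- A complex matrix has real entries. -/
def isReal {k l : ℕ} (X : Matrix (Fin k) (Fin l) ℂ) : Prop := ∀ i j, (X i j).im = 0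

/-- A complex matrix is purely imaginary (every entry has zero real part). -/
def isPurelyImag {k l : ℕ} (X : Matrix (Fin k) (Fin l) ℂ) : Prop := ∀ i j, (X i j).re = 0

/-- The symplectic matrix J_k = [[0, I],[−I, 0]]. -/
def Jmat (k : ℕ) : Matrix (Fin k ⊕ Fin k) (Fin k ⊕ Fin k) ℂ :=
  fromBlocks 0 1 (-1) 0

/-- D = [[Re S, −Im S],[Im S, Re S]]. -/
def quadD {m : ℕ} (S : Matrix (Fin m) (Fin m) ℂ) :
    Matrix (Fin m ⊕ Fin m) (Fin m ⊕ Fin m) ℂ :=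
  fromBlocks (matRe S) (-(matIm S)) (matIm S) (matRe S)

/-- C = [[Re(C₋+C₊), −Im(C₋−C₊)],[Im(C₋+C₊), Re(C₋−C₊)]]. -/
def quadC {m n : ℕ} (Cm Cp : Matrix (Fin m) (Fin n) ℂ) :
    Matrix (Fin m ⊕ Fin m) (Fin n ⊕ Fin n) ℂ :=
  fromBlocks (matRe (Cm + Cp)) (-(matIm (Cm - Cp))) (matIm (Cm + Cp)) (matRe (Cm - Cp))

/-- B = −[[Re((C₋−C₊)†), −Im((C₋−C₊)†)],[Im((C₋+C₊)†), Re((C₋+C₊)†)]]·D. -/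
def quadB {m n : ℕ} (S : Matrix (Fin m) (Fin m) ℂ) (Cm Cp : Matrix (Fin m) (Fin n) ℂ) :
    Matrix (Fin n ⊕ Fin n) (Fin m ⊕ Fin m) ℂ :=
  -(fromBlocks (matRe (Cm - Cp)ᴴ) (-(matIm (Cm - Cp)ᴴ))
      (matIm (Cm + Cp)ᴴ) (matRe (Cm + Cp)ᴴ)) * quadD S

/-- JH = [[Im(Ω₋+Ω₊), Re(Ω₋−Ω₊)],[−Re(Ω₋+Ω₊), Im(Ω₋−Ω₊)]]. -/
def quadJH {n : ℕ} (Om Op : Matrix (Fin n) (Fin n) ℂ) :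
    Matrix (Fin n ⊕ Fin n) (Fin n ⊕ Fin n) ℂ :=
  fromBlocks (matIm (Om + Op)) (matRe (Om - Op)) (-(matRe (Om + Op))) (matIm (Om - Op))

/-- C♯ = −J_n·Cᵀ·J_m. -/
def quadCsharp {m n : ℕ} (Cm Cp : Matrix (Fin m) (Fin n) ℂ) :
    Matrix (Fin n ⊕ Fin n) (Fin m ⊕ Fin m) ℂ :=
  -(Jmat n) * (quadC Cm Cp)ᵀ * (Jmat m)

/-- A = JH − (1/2)·C♯·C. -/
def quadA {m n : ℕ} (Cm Cp : Matrix (Fin m) (Fin n) ℂ) (Om Op : Matrix (Fin n) (Fin n) ℂ) :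
    Matrix (Fin n ⊕ Fin n) (Fin n ⊕ Fin n) ℂ :=
  quadJH Om Op - (1/2 : ℂ) • (quadCsharp Cm Cp * quadC Cm Cp)

/-- Transfer matrix G[s] = D + C(sI − A)⁻¹B. -/
def transferG {m n : ℕ} (S : Matrix (Fin m) (Fin m) ℂ) (Cm Cp : Matrix (Fin m) (Fin n) ℂ)
    (Om Op : Matrix (Fin n) (Fin n) ℂ) (s : ℂ) :
    Matrix (Fin m ⊕ Fin m) (Fin m ⊕ Fin m) ℂ :=
  quadD S + quadC Cm Cp *
    (s • (1 : Matrix (Fin n ⊕ Fin n) (Fin n ⊕ Fin n) ℂ) - quadA Cm Cp Om Op)⁻¹ *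
    quadB S Cm Cp

end LQS


section Aux
open LQS Matrix

lemma matRe_add' {k l : ℕ} (X : Matrix (Fin k) (Fin l) ℂ) :
    matRe (X + X) = (2:ℂ) • matRe X := by ext i j; simp [matRe]; ring

lemma matIm_add' {k l : ℕ} (X : Matrix (Fin k) (Fin l) ℂ) :
    matIm (X + X) = (2:ℂ) • matIm X := by ext i j; simp [matIm]; ring

lemma matRe_zero {k l : ℕ} : matRe (0 : Matrix (Fin k) (Fin l) ℂ) = 0 := by
  ext i j; simp [matRe]

lemma matIm_zero {k l : ℕ} : matIm (0 : Matrix (Fin k) (Fin l) ℂ) = 0 := by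
  ext i j; simp [matIm]

lemma matRe_one' {k : ℕ} : matRe (1 : Matrix (Fin k) (Fin k) ℂ) = 1 := by
  ext i j; simp [matRe, Matrix.one_apply, apply_ite]

lemma matIm_one' {k : ℕ} : matIm (1 : Matrix (Fin k) (Fin k) ℂ) = 0 := by
  ext i j; simp [matIm, Matrix.one_apply, apply_ite]

lemma matRe_ct {k l : ℕ} (X : Matrix (Fin k) (Fin l) ℂ) : matRe Xᴴ = (matRe X)ᵀ := by
  ext i j; simp [matRe, conjTranspose_apply]

lemma matIm_ct {k l : ℕ} (X : Matrix (Fin k) (Fin l) ℂ) : matIm Xᴴ = -(matIm X)ᵀ := by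
  ext i j; simp [matIm, conjTranspose_apply]

lemma quadD_one {m : ℕ} : quadD (1 : Matrix (Fin m) (Fin m) ℂ) = 1 := by
  rw [quadD, matRe_one', matIm_one', neg_zero, fromBlocks_one]

lemma quadC_qnd {m n : ℕ} (Cm : Matrix (Fin m) (Fin n) ℂ) :
    quadC Cm Cm = (2 : ℂ) • fromBlocks (matRe Cm) 0 (matIm Cm) 0 := by
  rw [quadC, sub_self, matRe_zero, matIm_zero, matRe_add', matIm_add', neg_zero,
    Matrix.fromBlocks_smul, smul_zero]

lemma quadB_qnd {m n : ℕ} (Cm : Matrix (Fin m) (Fin n) ℂ) :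
    quadB (1 : Matrix (Fin m) (Fin m) ℂ) Cm Cm
      = fromBlocks 0 0 ((-2 : ℂ) • matIm Cmᴴ) ((-2 : ℂ) • matRe Cmᴴ) := by
  rw [quadB, quadD_one, Matrix.mul_one, sub_self, conjTranspose_zero, conjTranspose_add,
    matRe_zero, matIm_zero, matRe_add', matIm_add', neg_zero]
  ext (i | i) (j | j) <;>
    simp [fromBlocks, Matrix.smul_apply, Matrix.neg_apply, smul_eq_mul] <;> ring

lemma quadCsharp_qnd {m n : ℕ} (Cm : Matrix (Fin m) (Fin n) ℂ) :
    quadCsharp Cm Cm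
      = fromBlocks 0 0 ((-2 : ℂ) • (matIm Cm)ᵀ) ((2 : ℂ) • (matRe Cm)ᵀ) := by
  rw [quadCsharp, quadC_qnd Cm, Jmat, Jmat]
  simp only [Matrix.transpose_smul, fromBlocks_transpose, transpose_zero, Matrix.neg_mul,
    Matrix.mul_smul, Matrix.smul_mul, fromBlocks_multiply, Matrix.mul_zero, Matrix.zero_mul,
    Matrix.mul_one, Matrix.one_mul, Matrix.mul_neg, add_zero, zero_add,
    neg_zero, fromBlocks_neg, smul_neg, neg_neg]
  rw [Matrix.fromBlocks_smul]
  simp only [smul_zero, neg_smul]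
  ext (i | i) (j | j) <;>
    simp [fromBlocks, Matrix.smul_apply, Matrix.neg_apply, smul_eq_mul] <;> ring

lemma quadA_qnd {m n : ℕ} (Cm : Matrix (Fin m) (Fin n) ℂ) (Om : Matrix (Fin n) (Fin n) ℂ) :
    quadA Cm Cm Om Om
      = (2 : ℂ) • fromBlocks (matIm Om) 0
          (-(matRe Om + matIm Cmᴴ * matRe Cm + matRe Cmᴴ * matIm Cm)) 0 := by
  rw [quadA, quadJH, sub_self, matRe_zero, matIm_zero, matRe_add', matIm_add',
    quadCsharp_qnd Cm, quadC_qnd Cm, matRe_ct, matIm_ct]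
  rw [Matrix.mul_smul, fromBlocks_multiply]
  simp only [Matrix.mul_zero, Matrix.zero_mul, add_zero, zero_add, Matrix.smul_mul,
    Matrix.neg_mul, smul_smul]
  rw [Matrix.fromBlocks_smul, Matrix.fromBlocks_smul]
  ext (i | i) (j | j) <;>
    simp [fromBlocks, Matrix.sub_apply, Matrix.smul_apply, Matrix.add_apply, Matrix.neg_apply,
      Matrix.mul_apply, smul_eq_mul] <;> ring

end Aux

open LQS Matrix

/-- q-coupling QND case (S = I, C₊ = C₋, Ω₊ = Ω₋): explicit state-space
matrices, uncontrollability of the q quadratures, and G[s] = I. -/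
theorem stmt_17 {m n : ℕ} (hm : 1 ≤ m) (hn : 1 ≤ n)
    (Cm : Matrix (Fin m) (Fin n) ℂ) (Om : Matrix (Fin n) (Fin n) ℂ)
    (hOmH : Omᴴ = Om) (hOpS : Omᵀ = Om) :
    quadC Cm Cm = (2 : ℂ) • fromBlocks (matRe Cm) 0 (matIm Cm) 0 ∧
    quadB (1 : Matrix (Fin m) (Fin m) ℂ) Cm Cm
      = fromBlocks 0 0 ((-2 : ℂ) • matIm Cmᴴ) ((-2 : ℂ) • matRe Cmᴴ) ∧
    quadA Cm Cm Om Om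
      = (2 : ℂ) • fromBlocks (matIm Om) 0
          (-(matRe Om + matIm Cmᴴ * matRe Cm + matRe Cmᴴ * matIm Cm)) 0 ∧
    (∀ k : ℕ, (fromCols 1 0 : Matrix (Fin n) (Fin n ⊕ Fin n) ℂ)
      * (quadA Cm Cm Om Om) ^ k
      * quadB (1 : Matrix (Fin m) (Fin m) ℂ) Cm Cm = 0) ∧
    (∀ s : ℂ,
      IsUnit (s • (1 : Matrix (Fin n ⊕ Fin n) (Fin n ⊕ Fin n) ℂ) - quadA Cm Cm Om Om) →
      transferG (1 : Matrix (Fin m) (Fin m) ℂ) Cm Cm Om Om s = 1) := by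
  refine ⟨quadC_qnd Cm, quadB_qnd Cm, quadA_qnd Cm Om, ?_, ?_⟩
  · -- uncontrollability of the q quadratures
    intro k
    set X : Matrix (Fin n) (Fin n) ℂ := (2:ℂ) • matIm Om with hX
    set Y : Matrix (Fin n) (Fin n) ℂ :=
      (2:ℂ) • (-(matRe Om + matIm Cmᴴ * matRe Cm + matRe Cmᴴ * matIm Cm)) with hY
    have hA' : quadA Cm Cm Om Om = fromBlocks X 0 Y 0 := by
      rw [quadA_qnd Cm Om, Matrix.fromBlocks_smul, smul_zero]
    have key : ∀ j : ℕ, (fromCols 1 0 : Matrix (Fin n) (Fin n ⊕ Fin n) ℂ)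
        * (quadA Cm Cm Om Om) ^ j = X ^ j * (fromCols 1 0 : Matrix (Fin n) (Fin n ⊕ Fin n) ℂ) := by
      intro j
      induction j with
      | zero => simp
      | succ j ih =>
        rw [pow_succ, ← Matrix.mul_assoc, ih, Matrix.mul_assoc, hA',
          fromCols_mul_fromBlocks, pow_succ, Matrix.mul_assoc, Matrix.mul_fromCols]
        simp
    rw [key k, quadB_qnd Cm, Matrix.mul_assoc, fromCols_mul_fromBlocks]
    simp [fromCols_zero]
  · -- transfer matrix is the identity
    intro s hs
    set X : Matrix (Fin n) (Fin n) ℂ := (2:ℂ) • matIm Om with hX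
    set Y : Matrix (Fin n) (Fin n) ℂ :=
      (2:ℂ) • (-(matRe Om + matIm Cmᴴ * matRe Cm + matRe Cmᴴ * matIm Cm)) with hY
    have hA' : quadA Cm Cm Om Om = fromBlocks X 0 Y 0 := by
      rw [quadA_qnd Cm Om, Matrix.fromBlocks_smul, smul_zero]
    have hM : s • (1 : Matrix (Fin n ⊕ Fin n) (Fin n ⊕ Fin n) ℂ) - quadA Cm Cm Om Om
        = fromBlocks (s • 1 - X) 0 (-Y) (s • (1 : Matrix (Fin n) (Fin n) ℂ)) := by
      rw [hA', ← fromBlocks_one, Matrix.fromBlocks_smul]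
      ext (i | i) (j | j) <;> simp [fromBlocks]
    rw [hM] at hs
    rw [Matrix.isUnit_fromBlocks_zero₁₂] at hs
    have hinv : (fromBlocks (s • 1 - X) 0 (-Y)
          (s • (1 : Matrix (Fin n) (Fin n) ℂ)))⁻¹
        = fromBlocks (s • 1 - X)⁻¹ 0
          (-((s • (1 : Matrix (Fin n) (Fin n) ℂ))⁻¹ * (-Y) * (s • 1 - X)⁻¹))
          (s • (1 : Matrix (Fin n) (Fin n) ℂ))⁻¹ :=
      Matrix.inv_fromBlocks_zero₁₂_of_isUnit_iff _ _ _ (iff_of_true hs.1 hs.2)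
    rw [transferG, quadD_one, hM, hinv, quadC_qnd Cm, quadB_qnd Cm]
    rw [Matrix.smul_mul, fromBlocks_multiply, Matrix.smul_mul, fromBlocks_multiply]
    simp
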